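/- For every T0 topological space X there exist a well-filtered space W(X) and a continuous map η_X : X → W(X) such that for every well-filtered space Y and every continuous map f : X → Y there is a unique continuous map f̂ : W(X) → Y with f = f̂ ∘ η_X. Consequently, the full subcategory of well-filtered spaces is reflective in the category of T0 spaces. -/

import Mathlib

open Set

/-- The specialization order of the paper: `x ≤ y` iff `x ∈ cl {y}`. -/
def specLE {X : Type*} [TopologicalSpace X] (x y : X) : Prop := x ∈ closure ({y} : Set X)

/-- Upward closure `↑A` w.r.t. the specialization order. -/
def upSet {X : Type*} [TopologicalSpace X] (A : Set X) : Set X := {y | ∃ x ∈ A, specLE x y}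

/-- Downward closure `↓A` w.r.t. the specialization order. -/
def downSet {X : Type*} [TopologicalSpace X] (A : Set X) : Set X := {y | ∃ x ∈ A, specLE y x}

/-- The saturation of a set: the intersection of all open sets containing it. -/
def sat {X : Type*} [TopologicalSpace X] (A : Set X) : Set X := ⋂₀ {U | IsOpen U ∧ A ⊆ U}

/-- A `T0` space is well-filtered if for every filtered family `𝓕` of compact saturated
sets and every open `U` with `⋂₀ 𝓕 ⊆ U`, some member of `𝓕` is contained in `U`. -/
def WellFilteredSpace (X : Type*) [TopologicalSpace X] : Prop :=
  ∀ 𝓕 : Set (Set X), 𝓕.Nonempty →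
    (∀ K ∈ 𝓕, IsCompact K ∧ sat K = K) →
    (∀ K₁ ∈ 𝓕, ∀ K₂ ∈ 𝓕, ∃ K₃ ∈ 𝓕, K₃ ⊆ K₁ ∩ K₂) →
    ∀ U : Set X, IsOpen U → ⋂₀ 𝓕 ⊆ U → ∃ K ∈ 𝓕, K ⊆ U

universe u v

section Aux
variable {A : Type*} [TopologicalSpace A]

lemma specLE_iff {x y : A} : specLE x y ↔ ∀ U : Set A, IsOpen U → x ∈ U → y ∈ U := by
  constructor
  · intro h U hU hx
    rcases (mem_closure_iff.1 h) U hU hx with ⟨z, hz, rfl⟩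
    exact hz
  · intro h
    rw [specLE, mem_closure_iff]
    intro o ho hx
    exact ⟨y, h o ho hx, rfl⟩

lemma subset_sat (s : Set A) : s ⊆ sat s := fun x hx U hU => hU.2 hx

lemma mem_sat_iff {s : Set A} {y : A} :
    y ∈ sat s ↔ ∀ U : Set A, IsOpen U → s ⊆ U → y ∈ U := by
  simp [sat, and_imp]

lemma sat_eq_upSet (s : Set A) : sat s = upSet s := by
  apply Subset.antisymm
  · intro y hy
    by_contra h
    have hsub : s ⊆ (closure {y})ᶜ := by
      intro x hx
      intro hxc
      exact h ⟨x, hx, hxc⟩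
    have := mem_sat_iff.1 hy _ isClosed_closure.isOpen_compl hsub
    exact this (subset_closure rfl)
  · rintro y ⟨x, hx, hxy⟩
    rw [mem_sat_iff]
    intro U hU hsU
    exact specLE_iff.1 hxy U hU (hsU hx)

lemma sat_mono {s t : Set A} (h : s ⊆ t) : sat s ⊆ sat t := by
  rw [sat_eq_upSet, sat_eq_upSet]
  rintro y ⟨x, hx, hxy⟩
  exact ⟨x, h hx, hxy⟩

lemma sat_sat (s : Set A) : sat (sat s) = sat s := by
  apply Subset.antisymm
  · intro y hy
    rw [mem_sat_iff] at hy ⊢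
    intro U hU hsU
    exact hy U hU ((fun x hx => mem_sat_iff.1 hx U hU hsU))
  · exact subset_sat _

lemma IsCompact.sat' {s : Set A} (hs : IsCompact s) : IsCompact (sat s) := by
  apply isCompact_of_finite_subcover
  intro ι U hU hcov
  rcases hs.elim_finite_subcover U hU ((subset_sat s).trans hcov) with ⟨t, ht⟩
  refine ⟨t, ?_⟩
  intro y hy
  exact mem_sat_iff.1 hy _ (isOpen_biUnion fun i _ => hU i) ht

lemma isClosed_downward {D : Set A} (hD : IsClosed D) {x y : A}
    (h : specLE x y) (hy : y ∈ D) : x ∈ D := by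
  have : closure ({y} : Set A) ⊆ D := by
    have : ({y} : Set A) ⊆ D := by simpa using hy
    simpa using hD.closure_subset_iff.2 this
  exact this h

lemma closure_singleton_inj [T0Space A] {x y : A}
    (h : closure ({x} : Set A) = closure ({y} : Set A)) : x = y :=
  (inseparable_iff_closure_eq.2 h).eq

/-- Topological Rudin lemma (Zorn part): a closed set meeting every member of a
family of compact sets contains a minimal such closed set. -/
lemma rudin (𝓕 : Set (Set A)) (hcomp : ∀ K ∈ 𝓕, IsCompact K)
    (C : Set A) (hC : IsClosed C) (hmeet : ∀ K ∈ 𝓕, (C ∩ K).Nonempty) :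
    ∃ C₀, IsClosed C₀ ∧ C₀ ⊆ C ∧ (∀ K ∈ 𝓕, (C₀ ∩ K).Nonempty) ∧
      ∀ D, IsClosed D → D ⊆ C₀ → (∀ K ∈ 𝓕, (D ∩ K).Nonempty) → D = C₀ := by
  set S : Set (Set A) := {E | IsClosed E ∧ E ⊆ C ∧ ∀ K ∈ 𝓕, (E ∩ K).Nonempty} with hS
  have hzorn := zorn_superset S ?_
  · rcases hzorn with ⟨m, hm⟩
    exact ⟨m, hm.1.1, hm.1.2.1, hm.1.2.2,
      fun D hD1 hD2 hD3 => hD2.antisymm (hm.2 ⟨hD1, hD2.trans hm.1.2.1, hD3⟩ hD2)⟩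
  · intro c hcS hchain
    rcases c.eq_empty_or_nonempty with rfl | hcne
    · exact ⟨C, ⟨hC, Subset.rfl, hmeet⟩, by simp⟩
    refine ⟨⋂₀ c, ⟨isClosed_sInter fun E hE => (hcS hE).1, ?_, ?_⟩, fun s hs => sInter_subset_of_mem hs⟩
    · rcases hcne with ⟨E, hE⟩
      exact (sInter_subset_of_mem hE).trans (hcS hE).2.1
    · intro K hK
      -- use compactness of K : finite intersection property over the chain
      have hKc := hcomp K hK
      have : (K ∩ ⋂ E : c, (E : Set A)).Nonempty := by
        apply hKc.inter_iInter_nonempty (fun E : c => (E : Set A))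
          (fun E => (hcS E.2).1)
        intro u
        rcases u.eq_empty_or_nonempty with rfl | hune
        · simpa using (hmeet K hK).mono inter_subset_right
        · -- a nonempty finite subset of a chain has a least element
          have : ∃ E₀ ∈ u, ∀ E ∈ u, (E₀ : Set A) ⊆ E := by
            rcases Finset.exists_minimal hune with ⟨E₀, hE₀u, hE₀min⟩
            refine ⟨E₀, hE₀u, fun E hE => ?_⟩
            rcases eq_or_ne E E₀ with rfl | hne
            · exact Subset.rfl
            · rcases hchain.total E.2 E₀.2 with h | h
              · exact absurd (lt_of_le_of_ne (show E ≤ E₀ from h) hne) (not_lt_of_ge (hE₀min hE h))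
              · exact h
          rcases this with ⟨E₀, hE₀u, hE₀⟩
          rcases (hcS E₀.2).2.2 K hK with ⟨x, hx1, hx2⟩
          refine ⟨x, hx2, ?_⟩
          rw [mem_iInter₂]
          intro E hEu
          exact hE₀ E hEu hx1
      rcases this with ⟨x, hx1, hx2⟩
      refine ⟨x, ?_, hx1⟩
      rw [mem_sInter]
      intro E hEc
      simpa using mem_iInter.1 hx2 ⟨E, hEc⟩

end Aux

section Aux2
variable {A : Type*} [TopologicalSpace A]

/-- Property (*) of a minimal closed set meeting all members of a family. -/
lemma minimal_star {𝓕 : Set (Set A)} {C₀ : Set A} (hC₀ : IsClosed C₀)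
    (hmeet : ∀ K ∈ 𝓕, (C₀ ∩ K).Nonempty)
    (hmin : ∀ D, IsClosed D → D ⊆ C₀ → (∀ K ∈ 𝓕, (D ∩ K).Nonempty) → D = C₀)
    {V : Set A} (hV : IsOpen V) (hCV : (C₀ ∩ V).Nonempty) :
    ∃ K ∈ 𝓕, (C₀ ∩ K).Nonempty ∧ C₀ ∩ K ⊆ V := by
  by_contra h
  push_neg at h
  have : C₀ ∩ Vᶜ = C₀ := by
    apply hmin _ (hC₀.inter hV.isClosed_compl) inter_subset_left
    intro K hK
    rcases not_subset.1 (h K hK (hmeet K hK)) with ⟨x, hx, hxV⟩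
    exact ⟨x, ⟨hx.1, hxV⟩, hx.2⟩
  rcases hCV with ⟨x, hx1, hx2⟩
  have : x ∈ C₀ ∩ Vᶜ := this.symm ▸ hx1
  exact this.2 hx2

/-- A minimal closed set meeting all members of a nonempty filtered family of
compact sets is irreducible. -/
lemma minimal_irreducible {𝓕 : Set (Set A)} (hne : 𝓕.Nonempty)
    (hfil : ∀ K₁ ∈ 𝓕, ∀ K₂ ∈ 𝓕, ∃ K₃ ∈ 𝓕, K₃ ⊆ K₁ ∩ K₂)
    {C₀ : Set A} (hC₀ : IsClosed C₀)
    (hmeet : ∀ K ∈ 𝓕, (C₀ ∩ K).Nonempty)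
    (hmin : ∀ D, IsClosed D → D ⊆ C₀ → (∀ K ∈ 𝓕, (D ∩ K).Nonempty) → D = C₀) :
    IsIrreducible C₀ := by
  constructor
  · rcases hne with ⟨K, hK⟩
    exact ((hmeet K hK).mono inter_subset_left)
  · intro V₁ V₂ hV₁ hV₂ h₁ h₂
    rcases minimal_star hC₀ hmeet hmin hV₁ h₁ with ⟨K₁, hK₁, hne₁, hsub₁⟩
    rcases minimal_star hC₀ hmeet hmin hV₂ h₂ with ⟨K₂, hK₂, hne₂, hsub₂⟩
    rcases hfil K₁ hK₁ K₂ hK₂ with ⟨K₃, hK₃, hsub₃⟩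
    rcases hmeet K₃ hK₃ with ⟨x, hx1, hx2⟩
    exact ⟨x, hx1, hsub₁ ⟨hx1, (hsub₃ hx2).1⟩, hsub₂ ⟨hx1, (hsub₃ hx2).2⟩⟩

/-- In a well-filtered space, a minimal closed set meeting all members of a
nonempty filtered family of compact saturated sets is a point closure. -/
lemma wf_minimal_eq_closure_singleton (hwf : WellFilteredSpace A)
    {𝓕 : Set (Set A)} (hne : 𝓕.Nonempty)
    (hcs : ∀ K ∈ 𝓕, IsCompact K ∧ sat K = K)
    (hfil : ∀ K₁ ∈ 𝓕, ∀ K₂ ∈ 𝓕, ∃ K₃ ∈ 𝓕, K₃ ⊆ K₁ ∩ K₂)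
    {C₀ : Set A} (hC₀ : IsClosed C₀)
    (hmeet : ∀ K ∈ 𝓕, (C₀ ∩ K).Nonempty)
    (hmin : ∀ D, IsClosed D → D ⊆ C₀ → (∀ K ∈ 𝓕, (D ∩ K).Nonempty) → D = C₀) :
    ∃ y ∈ C₀, C₀ = closure {y} := by
  classical
  set 𝓖 : Set (Set A) := (fun K => sat (K ∩ C₀)) '' 𝓕 with h𝓖
  have h𝓖ne : 𝓖.Nonempty := hne.image _
  have h𝓖cs : ∀ Q ∈ 𝓖, IsCompact Q ∧ sat Q = Q := by
    rintro Q ⟨K, hK, rfl⟩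
    exact ⟨((hcs K hK).1.inter_right hC₀).sat', sat_sat _⟩
  have h𝓖fil : ∀ Q₁ ∈ 𝓖, ∀ Q₂ ∈ 𝓖, ∃ Q₃ ∈ 𝓖, Q₃ ⊆ Q₁ ∩ Q₂ := by
    rintro Q₁ ⟨K₁, hK₁, rfl⟩ Q₂ ⟨K₂, hK₂, rfl⟩
    rcases hfil K₁ hK₁ K₂ hK₂ with ⟨K₃, hK₃, hsub⟩
    refine ⟨sat (K₃ ∩ C₀), ⟨K₃, hK₃, rfl⟩, subset_inter ?_ ?_⟩
    · exact sat_mono (inter_subset_inter_left _ (hsub.trans inter_subset_left))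
    · exact sat_mono (inter_subset_inter_left _ (hsub.trans inter_subset_right))
  have key : (⋂₀ 𝓖 ∩ C₀).Nonempty := by
    by_contra h
    have hsub : ⋂₀ 𝓖 ⊆ C₀ᶜ := by
      intro x hx
      intro hxC
      exact h ⟨x, hx, hxC⟩
    rcases hwf 𝓖 h𝓖ne h𝓖cs h𝓖fil C₀ᶜ hC₀.isOpen_compl hsub with ⟨Q, hQ, hQsub⟩
    rcases hQ with ⟨K, hK, rfl⟩
    rcases hmeet K hK with ⟨x, hx1, hx2⟩
    exact hQsub (subset_sat _ ⟨hx2, hx1⟩) hx1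
  rcases key with ⟨y, hy1, hy2⟩
  refine ⟨y, hy2, ?_⟩
  have hcl : closure ({y} : Set A) ⊆ C₀ := hC₀.closure_subset_iff.2 (by simpa using hy2)
  refine (hmin _ isClosed_closure hcl ?_).symm
  intro K hK
  have hyK : y ∈ sat (K ∩ C₀) := hy1 _ ⟨K, hK, rfl⟩
  rw [sat_eq_upSet] at hyK
  rcases hyK with ⟨x, hx, hxy⟩
  exact ⟨x, hxy, hx.1⟩

end Aux2

section Homeo
variable {A B : Type*} [TopologicalSpace A] [TopologicalSpace B]

lemma sat_image_homeo (h : A ≃ₜ B) (K : Set A) : sat (h '' K) = h '' sat K := by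
  ext y
  rw [mem_sat_iff]
  constructor
  · intro hy
    refine ⟨h.symm y, ?_, by simp⟩
    rw [mem_sat_iff]
    intro U hU hKU
    have : h '' K ⊆ h '' U := image_mono hKU
    have hopen : IsOpen (h '' U) := h.isOpen_image.2 hU
    have := hy _ hopen this
    rcases this with ⟨x, hxU, hxy⟩
    have : x = h.symm y := by
      have := congrArg h.symm hxy
      simpa using this
    exact this ▸ hxU
  · rintro ⟨x, hx, rfl⟩ U hU hKU
    rw [mem_sat_iff] at hx
    exact hx (h ⁻¹' U) (hU.preimage h.continuous) (fun a ha => hKU ⟨a, ha, rfl⟩)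

lemma wellFiltered_of_homeo (h : A ≃ₜ B) (hB : WellFilteredSpace B) :
    WellFilteredSpace A := by
  intro 𝓕 hne hcs hfil U hU hsub
  set 𝓕' : Set (Set B) := (fun K => h '' K) '' 𝓕 with h𝓕'
  have h1 : 𝓕'.Nonempty := hne.image _
  have h2 : ∀ K ∈ 𝓕', IsCompact K ∧ sat K = K := by
    rintro _ ⟨K, hK, rfl⟩
    refine ⟨((hcs K hK).1.image h.continuous), ?_⟩
    rw [sat_image_homeo, (hcs K hK).2]
  have h3 : ∀ K₁ ∈ 𝓕', ∀ K₂ ∈ 𝓕', ∃ K₃ ∈ 𝓕', K₃ ⊆ K₁ ∩ K₂ := by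
    rintro _ ⟨K₁, hK₁, rfl⟩ _ ⟨K₂, hK₂, rfl⟩
    rcases hfil K₁ hK₁ K₂ hK₂ with ⟨K₃, hK₃, hs⟩
    exact ⟨h '' K₃, ⟨K₃, hK₃, rfl⟩, (image_mono hs).trans
      (by rw [image_inter h.injective]) ⟩
  have h4 : IsOpen (h '' U) := h.isOpen_image.2 hU
  have h5 : ⋂₀ 𝓕' ⊆ h '' U := by
    intro y hy
    refine ⟨h.symm y, hsub ?_, by simp⟩
    intro K hK
    have : h '' K ∈ 𝓕' := ⟨K, hK, rfl⟩
    have := hy _ this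
    rcases this with ⟨x, hx, hxy⟩
    have : x = h.symm y := by simpa using congrArg h.symm hxy
    exact this ▸ hx
  rcases hB 𝓕' h1 h2 h3 _ h4 h5 with ⟨_, ⟨K, hK, rfl⟩, hKsub⟩
  refine ⟨K, hK, ?_⟩
  intro x hx
  rcases hKsub ⟨x, hx, rfl⟩ with ⟨x', hx', hxx'⟩
  have : x' = x := h.injective hxx'
  exact this ▸ hx'

end Homeo


section IrrCl
variable (X : Type u) [TopologicalSpace X]

/-- The set of irreducible closed subsets of `X` (points of the sobrification). -/
def IrrCl : Type u := {C : Set X // IsIrreducible C ∧ IsClosed C}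

variable {X}

/-- The basic "open" sets of the sobrification. -/
def hatO (U : Set X) : Set (IrrCl X) := {C | (C.1 ∩ U).Nonempty}

instance : TopologicalSpace (IrrCl X) where
  IsOpen O := ∃ U : Set X, IsOpen U ∧ O = hatO U
  isOpen_univ := by
    refine ⟨univ, isOpen_univ, ?_⟩
    ext C
    simp [hatO, C.2.1.nonempty]
  isOpen_inter := by
    rintro O₁ O₂ ⟨U₁, hU₁, rfl⟩ ⟨U₂, hU₂, rfl⟩
    refine ⟨U₁ ∩ U₂, hU₁.inter hU₂, ?_⟩
    ext C
    constructor
    · rintro ⟨h₁, h₂⟩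
      exact C.2.1.2 U₁ U₂ hU₁ hU₂ h₁ h₂
    · rintro ⟨x, hx1, hx2, hx3⟩
      exact ⟨⟨x, hx1, hx2⟩, ⟨x, hx1, hx3⟩⟩
  isOpen_sUnion := by
    intro S hS
    classical
    choose! f hf using hS
    refine ⟨⋃ O ∈ S, f O, isOpen_biUnion (fun O hO => (hf O hO).1), ?_⟩
    ext C
    constructor
    · rintro ⟨O, hOS, hCO⟩
      have := (hf O hOS).2 ▸ hCO
      rcases this with ⟨x, hx1, hx2⟩
      exact ⟨x, hx1, mem_biUnion hOS hx2⟩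
    · rintro ⟨x, hx1, hx2⟩
      rcases mem_iUnion₂.1 hx2 with ⟨O, hOS, hxO⟩
      exact ⟨O, hOS, (hf O hOS).2 ▸ (⟨x, hx1, hxO⟩ : C.1 ∩ f O |>.Nonempty)⟩

lemma isOpen_irrCl_iff {O : Set (IrrCl X)} :
    IsOpen O ↔ ∃ U : Set X, IsOpen U ∧ O = hatO U := Iff.rfl

lemma isOpen_hatO {U : Set X} (hU : IsOpen U) : IsOpen (hatO (X := X) U) := ⟨U, hU, rfl⟩

/-- Specialization in `IrrCl X` is inclusion. -/
lemma mem_closure_singleton_irrCl {C D : IrrCl X} :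
    C ∈ closure ({D} : Set (IrrCl X)) ↔ C.1 ⊆ D.1 := by
  rw [mem_closure_iff]
  constructor
  · intro h x hx
    by_contra hxD
    rcases h (hatO (D.1)ᶜ) (isOpen_hatO D.2.2.isOpen_compl) ⟨x, hx, hxD⟩ with
      ⟨E, hE1, hE2⟩
    rcases hE2 with rfl
    rcases hE1 with ⟨z, hz1, hz2⟩
    exact hz2 hz1
  · intro h o ho hCo
    rcases (isOpen_irrCl_iff.1 ho) with ⟨U, hU, rfl⟩
    rcases hCo with ⟨x, hx1, hx2⟩
    exact ⟨D, ⟨x, h hx1, hx2⟩, rfl⟩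

lemma mem_closure_irrCl {C : IrrCl X} {S : Set (IrrCl X)} :
    C ∈ closure S ↔ ∀ U : Set X, IsOpen U → (C.1 ∩ U).Nonempty →
      ∃ D ∈ S, (D.1 ∩ U).Nonempty := by
  rw [mem_closure_iff]
  constructor
  · intro h U hU hCU
    rcases h (hatO U) (isOpen_hatO hU) hCU with ⟨D, hD1, hD2⟩
    exact ⟨D, hD2, hD1⟩
  · intro h o ho hCo
    rcases (isOpen_irrCl_iff.1 ho) with ⟨U, hU, rfl⟩
    rcases h U hU hCo with ⟨D, hD1, hD2⟩
    exact ⟨D, hD2, hD1⟩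

instance : T0Space (IrrCl X) := by
  refine ⟨fun {C D} h => ?_⟩
  have hcl := inseparable_iff_closure_eq.1 h
  have h1 : C ∈ closure ({D} : Set (IrrCl X)) := by
    rw [← hcl]; exact subset_closure rfl
  have h2 : D ∈ closure ({C} : Set (IrrCl X)) := by
    rw [hcl]; exact subset_closure rfl
  exact Subtype.ext ((mem_closure_singleton_irrCl.1 h1).antisymm
    (mem_closure_singleton_irrCl.1 h2))

/-- The canonical map `X → IrrCl X`. -/
def etaIC (x : X) : IrrCl X :=
  ⟨closure {x}, isIrreducible_singleton.closure, isClosed_closure⟩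

lemma etaIC_preimage (U : Set X) (hU : IsOpen U) : etaIC ⁻¹' (hatO U) = U := by
  ext x
  constructor
  · rintro ⟨z, hz1, hz2⟩
    rcases mem_closure_iff.1 hz1 U hU hz2 with ⟨w, hw1, hw2⟩
    rcases hw2 with rfl
    exact hw1
  · intro hx
    exact ⟨x, subset_closure rfl, hx⟩

lemma continuous_etaIC : Continuous (etaIC : X → IrrCl X) := by
  rw [continuous_def]
  rintro O ⟨U, hU, rfl⟩
  rw [etaIC_preimage U hU]
  exact hU

end IrrCl

section More
variable {A : Type*} [TopologicalSpace A]

lemma closure_inter_open_nonempty {S V : Set A} (hV : IsOpen V) :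
    (closure S ∩ V).Nonempty ↔ (S ∩ V).Nonempty := by
  constructor
  · rintro ⟨z, hz1, hz2⟩
    rcases mem_closure_iff.1 hz1 V hV hz2 with ⟨w, hw1, hw2⟩
    exact ⟨w, hw2, hw1⟩
  · exact fun h => h.mono (inter_subset_inter_left _ subset_closure)

lemma mem_open_iff_closure_singleton {y : A} {V : Set A} (hV : IsOpen V) :
    y ∈ V ↔ (closure ({y} : Set A) ∩ V).Nonempty := by
  rw [closure_inter_open_nonempty hV]
  constructor
  · exact fun h => ⟨y, rfl, h⟩
  · rintro ⟨z, rfl, hz⟩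
    exact hz

end More

section WSp
variable {X : Type u} [TopologicalSpace X]

/-- "Well-filtered determined" irreducible closed sets. -/
def wdProp (C : IrrCl X) : Prop :=
  ∀ (Y : Type (max u v)) [TopologicalSpace Y] [T0Space Y], WellFilteredSpace Y →
    ∀ f : X → Y, Continuous f → ∃ y : Y, closure (f '' C.1) = closure {y}

variable (X) in
/-- The well-filtered reflection of `X`. -/
abbrev WSp : Type u := {C : IrrCl X // wdProp.{u, v} C}

instance : TopologicalSpace (WSp.{u, v} X) := instTopologicalSpaceSubtype

instance : T0Space (WSp.{u, v} X) := Subtype.t0Space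

lemma isOpen_WSp_iff {O : Set (WSp.{u, v} X)} :
    IsOpen O ↔ ∃ U : Set X, IsOpen U ∧ O = {C | (C.1.1 ∩ U).Nonempty} := by
  rw [isOpen_induced_iff]
  constructor
  · rintro ⟨O', ⟨U, hU, rfl⟩, rfl⟩
    exact ⟨U, hU, rfl⟩
  · rintro ⟨U, hU, rfl⟩
    exact ⟨hatO U, isOpen_hatO hU, rfl⟩

lemma mem_closure_singleton_WSp {C D : WSp.{u, v} X} :
    C ∈ closure ({D} : Set (WSp.{u, v} X)) ↔ C.1.1 ⊆ D.1.1 := by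
  rw [closure_subtype]
  simp only [image_singleton]
  exact mem_closure_singleton_irrCl

lemma mem_closure_WSp {C : WSp.{u, v} X} {S : Set (WSp.{u, v} X)} :
    C ∈ closure S ↔ ∀ U : Set X, IsOpen U → (C.1.1 ∩ U).Nonempty →
      ∃ D ∈ S, (D.1.1 ∩ U).Nonempty := by
  rw [closure_subtype, mem_closure_irrCl]
  constructor
  · intro h U hU hCU
    rcases h U hU hCU with ⟨D, ⟨D', hD'S, rfl⟩, hD2⟩
    exact ⟨D', hD'S, hD2⟩
  · intro h U hU hCU
    rcases h U hU hCU with ⟨D, hDS, hD2⟩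
    exact ⟨D.1, ⟨D, hDS, rfl⟩, hD2⟩

/-- The unit of the reflection. -/
def etaW (x : X) : WSp.{u, v} X :=
  ⟨etaIC x, by
    intro Y _ _ _ f hf
    refine ⟨f x, ?_⟩
    have h1 : closure (f '' closure ({x} : Set X)) = closure (f '' {x}) :=
      closure_image_closure hf
    rw [show (etaIC x).1 = closure ({x} : Set X) from rfl, h1, image_singleton]⟩

lemma continuous_etaW : Continuous (etaW : X → WSp.{u, v} X) :=
  Continuous.subtype_mk continuous_etaIC _

/-- The universal property: lifting a map to the reflection, given pointwise data. -/
theorem exists_lift {Y : Type*} [TopologicalSpace Y] [T0Space Y]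
    (f : X → Y) (hf : Continuous f)
    (h : ∀ C : WSp.{u, v} X, ∃ y : Y, closure (f '' C.1.1) = closure {y}) :
    ∃ g : WSp.{u, v} X → Y, Continuous g ∧
      (∀ C, closure (f '' C.1.1) = closure {g C}) ∧ f = g ∘ etaW ∧
      ∀ g' : WSp.{u, v} X → Y, Continuous g' → f = g' ∘ etaW → g' = g := by
  classical
  set g : WSp.{u, v} X → Y := fun C => (h C).choose with hg_def
  have hg : ∀ C, closure (f '' C.1.1) = closure {g C} := fun C => (h C).choose_spec
  have hcomm : f = g ∘ etaW := by
    funext x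
    apply closure_singleton_inj
    have h1 : closure (f '' (etaW x).1.1) = closure ({f x} : Set Y) := by
      have : closure (f '' closure ({x} : Set X)) = closure (f '' {x}) :=
        closure_image_closure hf
      rw [show (etaW x).1.1 = closure ({x} : Set X) from rfl, this, image_singleton]
    rw [← h1, hg (etaW x)]
    rfl
  have hmemV : ∀ (C : WSp.{u, v} X) (V : Set Y), IsOpen V →
      (g C ∈ V ↔ (C.1.1 ∩ f ⁻¹' V).Nonempty) := by
    intro C V hV
    rw [mem_open_iff_closure_singleton hV, ← hg C, closure_inter_open_nonempty hV]
    constructor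
    · rintro ⟨z, ⟨x, hx, rfl⟩, hzV⟩
      exact ⟨x, hx, hzV⟩
    · rintro ⟨x, hx, hxV⟩
      exact ⟨f x, ⟨x, hx, rfl⟩, hxV⟩
  have hgc : Continuous g := by
    rw [continuous_def]
    intro V hV
    have : g ⁻¹' V = {C : WSp.{u, v} X | (C.1.1 ∩ f ⁻¹' V).Nonempty} := by
      ext C
      exact hmemV C V hV
    rw [this]
    exact isOpen_WSp_iff.2 ⟨f ⁻¹' V, hV.preimage hf, rfl⟩
  refine ⟨g, hgc, hg, hcomm, ?_⟩
  intro g' hg' hcomm'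
  funext C
  apply closure_singleton_inj
  have h1 : f '' C.1.1 ⊆ closure {g' C} := by
    rintro _ ⟨x, hx, rfl⟩
    have hx1 : etaW x ∈ closure ({C} : Set (WSp.{u, v} X)) := by
      rw [mem_closure_singleton_WSp]
      exact closure_minimal (singleton_subset_iff.2 hx) C.1.2.2
    have : g' (etaW x) ∈ closure (g' '' {C}) :=
      image_closure_subset_closure_image hg' ⟨etaW x, hx1, rfl⟩
    rw [image_singleton] at this
    have hfx : f x = g' (etaW x) := congrFun hcomm' x
    rw [hfx]
    exact this
  have h2 : g' C ∈ closure (f '' C.1.1) := by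
    by_contra hy'
    have hV : IsOpen (closure (f '' C.1.1))ᶜ := isClosed_closure.isOpen_compl
    have hCopen : C ∈ g' ⁻¹' (closure (f '' C.1.1))ᶜ := hy'
    rcases isOpen_WSp_iff.1 ((hV.preimage hg')) with ⟨U, hU, hUeq⟩
    rw [hUeq] at hCopen
    rcases hCopen with ⟨x, hx1, hx2⟩
    have hetax : etaW x ∈ {D : WSp.{u, v} X | (D.1.1 ∩ U).Nonempty} :=
      ⟨x, subset_closure rfl, hx2⟩
    rw [← hUeq] at hetax
    have : f x ∈ (closure (f '' C.1.1))ᶜ := by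
      have hfx : f x = g' (etaW x) := congrFun hcomm' x
      rw [hfx]; exact hetax
    exact this (subset_closure ⟨x, hx1, rfl⟩)
  -- antisymmetry
  have hsub1 : closure ({g C} : Set Y) ⊆ closure {g' C} := by
    rw [← hg C]
    exact closure_minimal (by simpa using h1) isClosed_closure
  have hsub2 : closure ({g' C} : Set Y) ⊆ closure {g C} := by
    rw [← hg C]
    exact closure_minimal (by simpa using h2) isClosed_closure
  exact hsub2.antisymm hsub1

end WSp

section WF
variable {X : Type u} [TopologicalSpace X]

theorem wellFiltered_WSp : WellFilteredSpace (WSp.{u, v} X) := by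
  classical
  intro 𝓚 hne hcs hfil Uw hUw hsub
  by_contra hno
  push_neg at hno
  have hmeet0 : ∀ 𝒦 ∈ 𝓚, (Uwᶜ ∩ 𝒦).Nonempty := by
    intro 𝒦 h𝒦
    rcases not_subset.1 (hno 𝒦 h𝒦) with ⟨F, hF1, hF2⟩
    exact ⟨F, hF2, hF1⟩
  rcases rudin 𝓚 (fun K hK => (hcs K hK).1) Uwᶜ hUw.isClosed_compl hmeet0 with
    ⟨𝒞, h𝒞closed, h𝒞sub, h𝒞meet, h𝒞min⟩
  have h𝒞irr : IsIrreducible 𝒞 := minimal_irreducible hne hfil h𝒞closed h𝒞meet h𝒞min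
  -- the candidate point of `WSp X`
  set CX : Set X := closure (⋃ F ∈ 𝒞, (F : WSp.{u, v} X).1.1) with hCX
  have hCXirr : IsIrreducible CX := by
    constructor
    · rcases h𝒞irr.1 with ⟨F, hF⟩
      rcases F.1.2.1.1 with ⟨x, hx⟩
      exact ⟨x, subset_closure (mem_biUnion hF hx)⟩
    · intro U V hU hV hCU hCV
      rw [closure_inter_open_nonempty hU] at hCU
      rw [closure_inter_open_nonempty hV] at hCV
      rcases hCU with ⟨x, hx1, hx2⟩
      rcases mem_iUnion₂.1 hx1 with ⟨F₁, hF₁, hxF₁⟩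
      rcases hCV with ⟨z, hz1, hz2⟩
      rcases mem_iUnion₂.1 hz1 with ⟨F₂, hF₂, hzF₂⟩
      have hOU : IsOpen {D : WSp.{u, v} X | (D.1.1 ∩ U).Nonempty} :=
        isOpen_WSp_iff.2 ⟨U, hU, rfl⟩
      have hOV : IsOpen {D : WSp.{u, v} X | (D.1.1 ∩ V).Nonempty} :=
        isOpen_WSp_iff.2 ⟨V, hV, rfl⟩
      rcases h𝒞irr.2 _ _ hOU hOV ⟨F₁, hF₁, ⟨x, hxF₁, hx2⟩⟩ ⟨F₂, hF₂, ⟨z, hzF₂, hz2⟩⟩ with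
        ⟨F, hF𝒞, hFU, hFV⟩
      rcases F.1.2.1.2 U V hU hV hFU hFV with ⟨w, hw1, hw2⟩
      exact ⟨w, subset_closure (mem_biUnion hF𝒞 hw1), hw2⟩
  have hwd : wdProp.{u, v} (⟨CX, hCXirr, isClosed_closure⟩ : IrrCl X) := by
    intro Y _ _ hY f hf
    have h' : ∀ C : WSp.{u, v} X, ∃ y : Y, closure (f '' C.1.1) = closure {y} :=
      fun C => C.2 Y hY f hf
    rcases exists_lift f hf h' with ⟨g, hgc, hg, -, -⟩
    -- the filtered family in `Y`
    set 𝓖 : Set (Set Y) := (fun 𝒦 => sat (g '' (𝒦 ∩ 𝒞))) '' 𝓚 with h𝓖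
    have h𝓖ne : 𝓖.Nonempty := hne.image _
    have h𝓖cs : ∀ Q ∈ 𝓖, IsCompact Q ∧ sat Q = Q := by
      rintro _ ⟨𝒦, h𝒦, rfl⟩
      exact ⟨(((hcs 𝒦 h𝒦).1.inter_right h𝒞closed).image hgc).sat', sat_sat _⟩
    have h𝓖fil : ∀ Q₁ ∈ 𝓖, ∀ Q₂ ∈ 𝓖, ∃ Q₃ ∈ 𝓖, Q₃ ⊆ Q₁ ∩ Q₂ := by
      rintro _ ⟨𝒦₁, h𝒦₁, rfl⟩ _ ⟨𝒦₂, h𝒦₂, rfl⟩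
      rcases hfil 𝒦₁ h𝒦₁ 𝒦₂ h𝒦₂ with ⟨𝒦₃, h𝒦₃, hs⟩
      refine ⟨_, ⟨𝒦₃, h𝒦₃, rfl⟩, subset_inter ?_ ?_⟩
      · exact sat_mono (image_mono (inter_subset_inter_left _ (hs.trans inter_subset_left)))
      · exact sat_mono (image_mono (inter_subset_inter_left _ (hs.trans inter_subset_right)))
    set D : Set Y := closure (f '' CX) with hD
    have hDmeet : ∀ Q ∈ 𝓖, (D ∩ Q).Nonempty := by
      rintro _ ⟨𝒦, h𝒦, rfl⟩
      rcases h𝒞meet 𝒦 h𝒦 with ⟨F, hF𝒞, hF𝒦⟩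
      refine ⟨g F, ?_, subset_sat _ ⟨F, ⟨hF𝒦, hF𝒞⟩, rfl⟩⟩
      have : g F ∈ closure (f '' F.1.1) := by
        rw [hg F]; exact subset_closure rfl
      have hsubF : F.1.1 ⊆ CX := by
        intro a ha
        exact subset_closure (mem_biUnion hF𝒞 ha)
      exact closure_mono (image_mono hsubF) this
    have hDmin : ∀ D', IsClosed D' → D' ⊆ D → (∀ Q ∈ 𝓖, (D' ∩ Q).Nonempty) → D' = D := by
      intro D' hD'closed hD'sub hD'meet
      refine hD'sub.antisymm ?_
      have stepA : ∀ F₀ ∈ 𝒞, ∀ x ∈ (F₀ : WSp.{u, v} X).1.1, f x ∈ D' := by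
        intro F₀ hF₀ x hx
        by_contra hfx
        have hUopen : IsOpen (f ⁻¹' D'ᶜ) := hD'closed.isOpen_compl.preimage hf
        have hOopen : IsOpen {E : WSp.{u, v} X | (E.1.1 ∩ f ⁻¹' D'ᶜ).Nonempty} :=
          isOpen_WSp_iff.2 ⟨_, hUopen, rfl⟩
        have hC𝒞O : (𝒞 ∩ {E : WSp.{u, v} X | (E.1.1 ∩ f ⁻¹' D'ᶜ).Nonempty}).Nonempty :=
          ⟨F₀, hF₀, ⟨x, hx, hfx⟩⟩
        rcases minimal_star h𝒞closed h𝒞meet h𝒞min hOopen hC𝒞O with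
          ⟨𝒦₀, h𝒦₀, hne₀, hsub₀⟩
        rcases hD'meet _ ⟨𝒦₀, h𝒦₀, rfl⟩ with ⟨d, hd1, hd2⟩
        have hd2' : d ∈ sat (g '' (𝒦₀ ∩ 𝒞)) := hd2
        rw [sat_eq_upSet] at hd2'
        rcases hd2' with ⟨b, ⟨F₁, hF₁mem, rfl⟩, hbd⟩
        have hgF₁ : g F₁ ∈ D' := isClosed_downward hD'closed hbd hd1
        have hF₁𝒞 : F₁ ∈ 𝒞 ∩ 𝒦₀ := ⟨hF₁mem.2, hF₁mem.1⟩
        have := hsub₀ hF₁𝒞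
        rcases this with ⟨x₁, hx₁F, hx₁U⟩
        have : f x₁ ∈ D' := by
          have h1 : f x₁ ∈ closure (f '' F₁.1.1) := subset_closure ⟨x₁, hx₁F, rfl⟩
          rw [hg F₁] at h1
          exact (hD'closed.closure_subset_iff.2 (by simpa using hgF₁)) h1
        exact hx₁U this
      have stepB : f '' CX ⊆ D' := by
        have h1 : f '' (⋃ F ∈ 𝒞, (F : WSp.{u, v} X).1.1) ⊆ D' := by
          rintro _ ⟨x, hx, rfl⟩
          rcases mem_iUnion₂.1 hx with ⟨F₀, hF₀, hxF₀⟩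
          exact stepA F₀ hF₀ x hxF₀
        calc f '' CX ⊆ closure (f '' (⋃ F ∈ 𝒞, (F : WSp.{u, v} X).1.1)) :=
              image_closure_subset_closure_image hf
          _ ⊆ closure D' := closure_mono h1
          _ = D' := hD'closed.closure_eq
      exact closure_minimal stepB hD'closed
    rcases wf_minimal_eq_closure_singleton hY h𝓖ne h𝓖cs h𝓖fil isClosed_closure
      (fun Q hQ => hDmeet Q hQ) hDmin with ⟨y, -, hy⟩
    exact ⟨y, hy⟩
  set Cw : WSp.{u, v} X := ⟨⟨CX, hCXirr, isClosed_closure⟩, hwd⟩ with hCw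
  have hCw𝒞 : Cw ∈ 𝒞 := by
    have : Cw ∈ closure 𝒞 := by
      rw [mem_closure_WSp]
      intro U hU hCU
      have : (CX ∩ U).Nonempty := hCU
      rw [hCX, closure_inter_open_nonempty hU] at this
      rcases this with ⟨x, hx1, hx2⟩
      rcases mem_iUnion₂.1 hx1 with ⟨F, hF, hxF⟩
      exact ⟨F, hF, ⟨x, hxF, hx2⟩⟩
    rwa [h𝒞closed.closure_eq] at this
  have hCwK : ∀ 𝒦 ∈ 𝓚, Cw ∈ 𝒦 := by
    intro 𝒦 h𝒦
    rcases h𝒞meet 𝒦 h𝒦 with ⟨F, hF𝒞, hF𝒦⟩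
    have hle : specLE F Cw := by
      rw [specLE, mem_closure_singleton_WSp]
      intro a ha
      exact subset_closure (mem_biUnion hF𝒞 ha)
    have : Cw ∈ upSet 𝒦 := ⟨F, hF𝒦, hle⟩
    rw [← sat_eq_upSet, (hcs 𝒦 h𝒦).2] at this
    exact this
  have : Cw ∈ Uw := hsub (fun 𝒦 h𝒦 => hCwK 𝒦 h𝒦)
  exact (h𝒞sub hCw𝒞) this

end WF

theorem stmt19' :
    ∀ (X : Type u) [TopologicalSpace X] [T0Space X],
      ∃ (W : TopCat.{u}) (η : X → W),
        T0Space W ∧ WellFilteredSpace W ∧ Continuous η ∧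
        ∀ (Y : Type v) [TopologicalSpace Y] [T0Space Y], WellFilteredSpace Y →
          ∀ f : X → Y, Continuous f →
            ∃ g : W → Y, Continuous g ∧ f = g ∘ η ∧
              ∀ g' : W → Y, Continuous g' → f = g' ∘ η → g' = g := by
  intro X _ _
  refine ⟨TopCat.of (WSp.{u, v} X), etaW, ?_, ?_, ?_, ?_⟩
  · show T0Space (WSp.{u, v} X); infer_instance
  · exact wellFiltered_WSp
  · exact continuous_etaW
  · intro Y _ _ hY f hf
    -- transfer along `ULift` to apply `wdProp`
    let e : ULift.{max u v} Y ≃ₜ Y := Homeomorph.ulift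
    haveI : T0Space (ULift.{max u v} Y) := e.isEmbedding.t0Space
    have hY' : WellFilteredSpace (ULift.{max u v} Y) := wellFiltered_of_homeo e hY
    have hfe : Continuous (fun x => e.symm (f x)) := e.symm.continuous.comp hf
    have h : ∀ C : WSp.{u, v} X, ∃ y : Y, closure (f '' C.1.1) = closure {y} := by
      intro C
      rcases C.2 (ULift.{max u v} Y) hY' (fun x => e.symm (f x)) hfe with ⟨y, hy⟩
      refine ⟨e y, ?_⟩
      have h1 := congrArg (fun S => e '' S) hy
      beta_reduce at h1
      have h2 : e '' ((fun x => e.symm (f x)) '' C.1.1) = f '' C.1.1 := by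
        rw [← image_comp]
        simp [Function.comp]
      rw [e.image_closure, e.image_closure, h2, image_singleton] at h1
      exact h1
    rcases exists_lift f hf h with ⟨g, hgc, -, hcomm, huniq⟩
    exact ⟨g, hgc, hcomm, huniq⟩


theorem stmt19 :
    ∀ (X : Type u) [TopologicalSpace X] [T0Space X],
      ∃ (W : TopCat.{u}) (η : X → W),
        T0Space W ∧ WellFilteredSpace W ∧ Continuous η ∧
        ∀ (Y : Type v) [TopologicalSpace Y] [T0Space Y], WellFilteredSpace Y →
          ∀ f : X → Y, Continuous f →
            ∃ g : W → Y, Continuous g ∧ f = g ∘ η ∧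
              ∀ g' : W → Y, Continuous g' → f = g' ∘ η → g' = g := stmt19'
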